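/- The offline variant of graph orientation under uncertainty is NP-hard: given a graph G' = (V', E') with open intervals I_v and known precise weights w_v ∈ I_v such that for every edge {u,v} ∈ E', I_u ∩ I_v ≠ ∅, w_v ∉ I_u and w_u ∉ I_v, a set Q ⊆ V' is a feasible query set iff Q is a vertex cover of G'; hence computing a minimum feasible query set on such instances is exactly minimum vertex cover. In particular, in this configuration a query set determines the orientation of every edge iff it contains at least one endpoint of every edge. -/

import Mathlib

open Finset

/-- Lower endpoint of vertex `v`'s interval after querying the set `Q`. -/
def qlo {V : Type*} [DecidableEq V] (L w : V → ℝ) (Q : Finset V) (v : V) : ℝ :=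
  if v ∈ Q then w v else L v

/-- Upper endpoint of vertex `v`'s interval after querying the set `Q`. -/
def qhi {V : Type*} [DecidableEq V] (U w : V → ℝ) (Q : Finset V) (v : V) : ℝ :=
  if v ∈ Q then w v else U v

/-- The query set `Q` suffices to orient the hyperedge `S`: some vertex of `S`
has its (updated) interval weakly below all other (updated) intervals of `S`. -/
def Solves {V : Type*} [DecidableEq V] (L U w : V → ℝ) (Q : Finset V) (S : Finset V) : Prop :=
  ∃ m ∈ S, ∀ u ∈ S, u ≠ m → qhi U w Q m ≤ qlo L w Q u

section Query

variable {V : Type*} [DecidableEq V] {L U w : V → ℝ} {Q : Finset V} {u v : V}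

theorem qlo_of_mem (h : v ∈ Q) : qlo L w Q v = w v := if_pos h

theorem qlo_of_notMem (h : v ∉ Q) : qlo L w Q v = L v := if_neg h

theorem qhi_of_mem (h : v ∈ Q) : qhi U w Q v = w v := if_pos h

theorem qhi_of_notMem (h : v ∉ Q) : qhi U w Q v = U v := if_neg h

def EdgeOriented (L U w : V → ℝ) (Q : Finset V) (u v : V) : Prop :=
  qhi U w Q u ≤ qlo L w Q v ∨ qhi U w Q v ≤ qlo L w Q u

theorem EdgeOriented.symm (h : EdgeOriented L U w Q u v) : EdgeOriented L U w Q v u :=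
  Or.symm h

theorem not_edgeOriented_of_notMem (hI : (Set.Ioo (L u) (U u) ∩ Set.Ioo (L v) (U v)).Nonempty)
    (hu : u ∉ Q) (hv : v ∉ Q) : ¬ EdgeOriented L U w Q u v := by
  obtain ⟨x, ⟨hLu, hUu⟩, ⟨hLv, hUv⟩⟩ := hI
  rw [EdgeOriented, qhi_of_notMem hu, qhi_of_notMem hv, qlo_of_notMem hu, qlo_of_notMem hv]
  rintro (h | h) <;> linarith

theorem edgeOriented_of_mem (hwu : w u ∉ Set.Ioo (L v) (U v)) (hu : u ∈ Q) :
    EdgeOriented L U w Q u v := by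
  rw [EdgeOriented, qhi_of_mem hu, qlo_of_mem hu]
  by_cases hv : v ∈ Q
  · rw [qhi_of_mem hv, qlo_of_mem hv]
    exact le_total (w u) (w v)
  · rw [qhi_of_notMem hv, qlo_of_notMem hv]
    simpa only [Set.mem_Ioo, not_and_or, not_lt] using hwu

end Query

theorem stmt19_general {V : Type*} [DecidableEq V] (G : SimpleGraph V) (L U w : V → ℝ)
    (hedge : ∀ u v : V, G.Adj u v →
      (Set.Ioo (L u) (U u) ∩ Set.Ioo (L v) (U v)).Nonempty ∧
      w u ∉ Set.Ioo (L v) (U v) ∧ w v ∉ Set.Ioo (L u) (U u))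
    (Q : Finset V) :
    (∀ u v : V, G.Adj u v →
        (qhi U w Q u ≤ qlo L w Q v ∨ qhi U w Q v ≤ qlo L w Q u)) ↔
    (∀ u v : V, G.Adj u v → u ∈ Q ∨ v ∈ Q) := by
  constructor
  · intro horient u v huv
    by_contra! hcover
    exact not_edgeOriented_of_notMem (hedge u v huv).1 hcover.1 hcover.2 (horient u v huv)
  · intro hcover u v huv
    obtain ⟨-, hwu, hwv⟩ := hedge u v huv
    rcases hcover u v huv with hu | hv
    · exact edgeOriented_of_mem hwu hu
    · exact (edgeOriented_of_mem hwv hv).symm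

theorem stmt19 {V : Type*} [DecidableEq V] (G : SimpleGraph V) (L U w : V → ℝ)
    (hw : ∀ x : V, w x ∈ Set.Ioo (L x) (U x))
    (hedge : ∀ u v : V, G.Adj u v →
      (Set.Ioo (L u) (U u) ∩ Set.Ioo (L v) (U v)).Nonempty ∧
      w u ∉ Set.Ioo (L v) (U v) ∧ w v ∉ Set.Ioo (L u) (U u))
    (Q : Finset V) :
    (∀ u v : V, G.Adj u v →
        (qhi U w Q u ≤ qlo L w Q v ∨ qhi U w Q v ≤ qlo L w Q u)) ↔
    (∀ u v : V, G.Adj u v → u ∈ Q ∨ v ∈ Q) :=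
  stmt19_general G L U w hedge Q
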